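/- arXiv:1602.02558 — 8 statements merged into one kernel-verified Lean document; each statement's English description precedes it below -/
import Mathlib

section
/- Let X be a real Banach space and (P_λ)_{λ∈Λ} a projectional skeleton on X such that sup_{λ∈Λ} ‖P_λ‖ = r for some r ∈ [1, ∞). Then the induced subspace D = ⋃_{λ∈Λ} P_λ*[X*] is an r-norming subspace of X*. -/
open Set Topology Filter

/-- A projectional skeleton on a Banach space `X`: a family of bounded linear projections
indexed by an up-directed partially ordered set `Λ`, satisfying conditions (i)-(iv). -/
structure IsProjSkeleton {X : Type*} [NormedAddCommGroup X] [NormedSpace ℝ X]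
    {Λ : Type*} [PartialOrder Λ] (P : Λ → X →L[ℝ] X) : Prop where
  /-- `Λ` is up-directed. -/
  directed : ∀ a b : Λ, ∃ c : Λ, a ≤ c ∧ b ≤ c
  /-- Each `P l` is a projection. -/
  idem : ∀ l : Λ, (P l).comp (P l) = P l
  /-- (i) The range of each `P l` is separable. -/
  sep : ∀ l : Λ, TopologicalSpace.IsSeparable (Set.range (P l) : Set X)
  /-- (ii) `P l ∘ P m = P l` whenever `l ≤ m`. -/
  comp_le : ∀ l m : Λ, l ≤ m → (P l).comp (P m) = P l
  /-- (ii) `P m ∘ P l = P l` whenever `l ≤ m`. -/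
  le_comp : ∀ l m : Λ, l ≤ m → (P m).comp (P l) = P l
  /-- (iii) Every increasing sequence in `Λ` has a supremum `s`, and the range of `P s` is the
  closure of the union of the ranges of the `P (l n)`. -/
  sup_seq : ∀ l : ℕ → Λ, Monotone l → ∃ s : Λ, IsLUB (Set.range l) s ∧
    (Set.range (P s) : Set X) = closure (⋃ n : ℕ, (Set.range (P (l n)) : Set X))
  /-- (iv) `X` is the union of the ranges. -/
  covers : ∀ x : X, ∃ l : Λ, x ∈ Set.range (P l)

/-- The subspace of `X*` induced by the skeleton: `D = ⋃ λ, P λ* [X*]`, where the adjoint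
`P λ*` maps `f` to `f ∘ P λ`. -/
def inducedSubspace {X : Type*} [NormedAddCommGroup X] [NormedSpace ℝ X]
    {Λ : Type*} (P : Λ → X →L[ℝ] X) : Set (StrongDual ℝ X) :=
  ⋃ l : Λ, Set.range (fun f : StrongDual ℝ X => f.comp (P l))

/-- A set `D ⊆ X*` is `r`-norming if `‖x‖ ≤ r * sup {|f x| : f ∈ D, ‖f‖ ≤ 1}` for all `x`. -/
def IsNorming {X : Type*} [NormedAddCommGroup X] [NormedSpace ℝ X]
    (D : Set (StrongDual ℝ X)) (r : ℝ) : Prop :=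
  ∀ x : X, ‖x‖ ≤ r * sSup {t : ℝ | ∃ f ∈ D, ‖f‖ ≤ 1 ∧ t = |f x|}

/-!
Every `x` lies in the range of some `P λ`, so `P λ x = x`. If `f` is a functional of norm at most
one with `f x = ‖x‖`, then `P λ* (r⁻¹ f) = r⁻¹ f ∘ P λ` lies in `D`, has norm at most
`r⁻¹ ‖P λ‖ ≤ 1`, and takes the value `‖x‖ / r` at `x`.
-/

section Norming

variable {X : Type*} [NormedAddCommGroup X] [NormedSpace ℝ X]

theorem abs_apply_le_sSup_of_mem {D : Set (StrongDual ℝ X)} {g : StrongDual ℝ X} (hgD : g ∈ D)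
    (hg : ‖g‖ ≤ 1) (x : X) : |g x| ≤ sSup {t : ℝ | ∃ f ∈ D, ‖f‖ ≤ 1 ∧ t = |f x|} := by
  have hbdd : BddAbove {t : ℝ | ∃ f ∈ D, ‖f‖ ≤ 1 ∧ t = |f x|} := by
    refine ⟨‖x‖, ?_⟩
    rintro t ⟨f, -, hf, rfl⟩
    simpa using (f.le_opNorm x).trans (mul_le_of_le_one_left (norm_nonneg x) hf)
  exact le_csSup hbdd ⟨g, hgD, hg, rfl⟩

theorem exists_comp_norm_le_one_of_apply_eq_self (T : X →L[ℝ] X) {r : ℝ} (hT : ‖T‖ ≤ r)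
    {x : X} (hx : T x = x) :
    ∃ f : StrongDual ℝ X, ‖f.comp T‖ ≤ 1 ∧ ‖x‖ ≤ r * |f.comp T x| := by
  rcases ((norm_nonneg T).trans hT).eq_or_lt with rfl | hr
  · refine ⟨0, by simp, ?_⟩
    calc ‖x‖ = ‖T x‖ := by rw [hx]
      _ ≤ ‖T‖ * ‖x‖ := T.le_opNorm x
      _ ≤ 0 * ‖x‖ := mul_le_mul_of_nonneg_right hT (norm_nonneg x)
      _ = 0 * |(0 : StrongDual ℝ X).comp T x| := by simp
  · obtain ⟨f, hf, hfx⟩ := exists_dual_vector'' ℝ x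
    refine ⟨r⁻¹ • f, ?_, ?_⟩
    · calc ‖(r⁻¹ • f).comp T‖ ≤ ‖r⁻¹ • f‖ * ‖T‖ := (r⁻¹ • f).opNorm_comp_le T
        _ ≤ r⁻¹ * r := by
          rw [norm_smul, Real.norm_of_nonneg (inv_nonneg.2 hr.le)]
          gcongr
          exact mul_le_of_le_one_right (inv_nonneg.2 hr.le) hf
        _ = 1 := inv_mul_cancel₀ hr.ne'
    · simp [hx, hfx, abs_of_pos hr, hr.ne']

end Norming

theorem IsProjSkeleton.apply_eq_self_of_mem_range {X : Type*} [NormedAddCommGroup X]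
    [NormedSpace ℝ X] {Λ : Type*} [PartialOrder Λ] {P : Λ → X →L[ℝ] X} (hsk : IsProjSkeleton P)
    {l : Λ} {x : X} (hx : x ∈ Set.range (P l)) : P l x = x := by
  obtain ⟨y, rfl⟩ := hx
  exact congr($(hsk.idem l) y)

theorem inducedSubspace_isNorming_general {X : Type*} [NormedAddCommGroup X] [NormedSpace ℝ X]
    {Λ : Type*} [PartialOrder Λ] (P : Λ → X →L[ℝ] X)
    (hsk : IsProjSkeleton P) (r : ℝ)
    (hsup : IsLUB (Set.range fun l : Λ => ‖P l‖) r) :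
    IsNorming (inducedSubspace P) r := by
  intro x
  obtain ⟨l, hxl⟩ := hsk.covers x
  have hPl : ‖P l‖ ≤ r := hsup.1 ⟨l, rfl⟩
  obtain ⟨f, hf, hfx⟩ :=
    exists_comp_norm_le_one_of_apply_eq_self (P l) hPl (hsk.apply_eq_self_of_mem_range hxl)
  have hfD : f.comp (P l) ∈ inducedSubspace P := Set.mem_iUnion.2 ⟨l, f, rfl⟩
  calc ‖x‖ ≤ r * |f.comp (P l) x| := hfx
    _ ≤ r * sSup {t : ℝ | ∃ g ∈ inducedSubspace P, ‖g‖ ≤ 1 ∧ t = |g x|} :=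
      mul_le_mul_of_nonneg_left (abs_apply_le_sSup_of_mem hfD hf x) ((norm_nonneg _).trans hPl)

/-- If `(P λ)` is a projectional skeleton on `X` with `sup ‖P λ‖ = r ∈ [1, ∞)`, then the
induced subspace `D = ⋃ λ, P λ*[X*]` is `r`-norming. -/
theorem inducedSubspace_isNorming {X : Type*} [NormedAddCommGroup X] [NormedSpace ℝ X]
    [CompleteSpace X] {Λ : Type*} [PartialOrder Λ] (P : Λ → X →L[ℝ] X)
    (hsk : IsProjSkeleton P) (r : ℝ) (hr : 1 ≤ r)
    (hsup : IsLUB (Set.range fun l : Λ => ‖P l‖) r) :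
    IsNorming (inducedSubspace P) r :=
  inducedSubspace_isNorming_general P hsk r hsup
end

section
/- Let X be a real Banach space and (P_λ)_{λ∈Λ} a projectional skeleton on X satisfying moreover: (iii') for every increasing sequence (λ_n) in Λ with supremum λ ∈ Λ one has P_λ x = lim_{n→∞} P_{λ_n} x for every x ∈ X, and (v) sup_{λ∈Λ} ‖P_λ‖ < ∞. If the induced subspace D = ⋃_{λ∈Λ} P_λ*[X*] is r-norming for some r ≥ 1, then the set Λ' = {λ ∈ Λ : ‖P_λ‖ ≤ r} is a closed cofinal subset of Λ. -/
/-
Closedness: `P λ x` is the limit of `P λₙ x`, and the operator norm is lower semicontinuous under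
pointwise convergence.

Cofinality: starting from `λ₀`, choose `λ₀ ≤ λ₁ ≤ ⋯` so that for each `n` every point of a countable
dense subset of `P λₙ[X]` is almost `r`-normed by a unit functional `g ∘ P μ` with `μ ≤ λₙ₊₁`
(countably many `μ`, which a skeleton can bound). Let `λ` be the supremum. Every such functional
satisfies `f ∘ P λ = f`, and these functionals almost `r`-norm a dense subset of `P λ[X]`, so for
`y` close to `P λ x` we get `‖P λ x‖ ≈ ‖y‖ ≲ r |f y| ≈ r |f (P λ x)| = r |f x| ≤ r ‖x‖`.
-/

open Set Topology Filter

theorem ContinuousLinearMap.opNorm_le_of_tendsto {𝕜 E F ι : Type*} [NontriviallyNormedField 𝕜]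
    [SeminormedAddCommGroup E] [SeminormedAddCommGroup F] [NormedSpace 𝕜 E] [NormedSpace 𝕜 F]
    {l : Filter ι} [l.NeBot] {T : ι → E →L[𝕜] F} {S : E →L[𝕜] F} {C : ℝ} (hC : 0 ≤ C)
    (hT : ∀ i, ‖T i‖ ≤ C) (hlim : ∀ x, Tendsto (fun i => T i x) l (𝓝 (S x))) : ‖S‖ ≤ C :=
  S.opNorm_le_bound hC fun x =>
    le_of_tendsto (hlim x).norm (Eventually.of_forall fun i => (T i).le_of_opNorm_le (hT i) x)

theorem ContinuousLinearMap.opNorm_le_of_almost_norming {X : Type*} [NormedAddCommGroup X]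
    [NormedSpace ℝ X] {T : X →L[ℝ] X} {r : ℝ} (hr : 0 ≤ r) {A : Set X}
    (hA : range T ⊆ closure A)
    (hnorming : ∀ y ∈ A, ∀ ε > 0, ∃ f : StrongDual ℝ X, ‖f‖ ≤ 1 ∧ f.comp T = f ∧
      ‖y‖ ≤ r * |f y| + ε) :
    ‖T‖ ≤ r := by
  refine T.opNorm_le_bound hr fun x => le_of_forall_pos_le_add fun ε hε => ?_
  set δ := ε / (r + 2)
  have hδ : 0 < δ := by positivity
  have hδε : r * δ + 2 * δ = ε := by simp only [δ]; field_simp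
  obtain ⟨y, hyA, hy⟩ := Metric.mem_closure_iff.1 (hA (mem_range_self x)) δ hδ
  rw [dist_eq_norm] at hy
  obtain ⟨f, hf, hfT, hfy⟩ := hnorming y hyA δ hδ
  have hf_le : ∀ z, ‖f z‖ ≤ ‖z‖ := fun z => (f.le_of_opNorm_le hf z).trans_eq (one_mul _)
  have hfy_le : |f y| ≤ ‖x‖ + δ :=
    calc |f y| = ‖f (T x) - f (T x - y)‖ := by rw [← map_sub, sub_sub_cancel, Real.norm_eq_abs]
      _ ≤ ‖f (T x)‖ + ‖f (T x - y)‖ := norm_sub_le _ _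
      _ = ‖f x‖ + ‖f (T x - y)‖ := by rw [← f.comp_apply T, hfT]
      _ ≤ ‖x‖ + δ := add_le_add (hf_le x) ((hf_le _).trans hy.le)
  calc ‖T x‖ ≤ ‖y‖ + ‖T x - y‖ := norm_le_norm_add_norm_sub' _ _
    _ ≤ r * (‖x‖ + δ) + δ + δ := by gcongr; exact hfy.trans (by gcongr)
    _ = r * ‖x‖ + ε := by linarith

theorem IsNorming.exists_almost_norming {X : Type*} [NormedAddCommGroup X] [NormedSpace ℝ X]
    {D : Set (StrongDual ℝ X)} {r : ℝ} (hD : IsNorming D r) (hr : 0 < r) (h0 : 0 ∈ D) (x : X)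
    {ε : ℝ} (hε : 0 < ε) : ∃ f ∈ D, ‖f‖ ≤ 1 ∧ ‖x‖ ≤ r * |f x| + ε := by
  set S := {t : ℝ | ∃ f ∈ D, ‖f‖ ≤ 1 ∧ t = |f x|}
  have hS : S.Nonempty := ⟨0, 0, h0, by simp, by simp⟩
  obtain ⟨_, ⟨f, hfD, hf, rfl⟩, hlt⟩ :=
    exists_lt_of_lt_csSup hS (sub_lt_self (sSup S) (div_pos hε hr))
  refine ⟨f, hfD, hf, (hD x).trans ?_⟩
  calc r * sSup S ≤ r * (|f x| + ε / r) := by gcongr; linarith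
    _ = r * |f x| + ε := by field_simp

theorem zero_mem_inducedSubspace {X : Type*} [NormedAddCommGroup X] [NormedSpace ℝ X] {Λ : Type*}
    {P : Λ → X →L[ℝ] X} (l : Λ) : 0 ∈ inducedSubspace P :=
  mem_iUnion.2 ⟨l, 0, ContinuousLinearMap.zero_comp _⟩

section Skeleton

variable {X : Type*} [NormedAddCommGroup X] [NormedSpace ℝ X] {Λ : Type*} [PartialOrder Λ]
  {P : Λ → X →L[ℝ] X}

namespace IsProjSkeleton

theorem bddAbove_range_nat (hsk : IsProjSkeleton P) (μ : ℕ → Λ) : BddAbove (range μ) := by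
  choose ub hub using hsk.directed
  let ν : ℕ → Λ := fun n => Nat.rec (μ 0) (fun k b => ub b (μ (k + 1))) n
  have hmono : Monotone ν := monotone_nat_of_le_succ fun n => (hub _ _).1
  have hμν : ∀ n, μ n ≤ ν n
    | 0 => le_rfl
    | _ + 1 => (hub _ _).2
  obtain ⟨s, hs, -⟩ := hsk.sup_seq ν hmono
  exact ⟨s, forall_mem_range.2 fun n => (hμν n).trans (hs.1 (mem_range_self n))⟩

theorem exists_ge_of_countable (hsk : IsProjSkeleton P) {ι : Type*} [Countable ι] (μ : ι → Λ)
    (l : Λ) : ∃ b, l ≤ b ∧ ∀ i, μ i ≤ b := by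
  obtain ⟨e, he⟩ := exists_surjective_nat (Option ι)
  obtain ⟨b, hb⟩ := hsk.bddAbove_range_nat fun n => (e n).elim l μ
  have hb' : ∀ o : Option ι, o.elim l μ ≤ b := fun o => by
    obtain ⟨n, rfl⟩ := he o
    exact hb (mem_range_self n)
  exact ⟨b, hb' none, fun i => hb' (some i)⟩

end IsProjSkeleton

variable (P) in
def AlmostNormedBelow (r : ℝ) (l : Λ) (A : Set X) : Prop :=
  ∀ y ∈ A, ∀ ε > 0, ∃ μ ≤ l, ∃ g : StrongDual ℝ X, ‖g.comp (P μ)‖ ≤ 1 ∧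
    ‖y‖ ≤ r * |g (P μ y)| + ε

theorem AlmostNormedBelow.mono {r : ℝ} {l l' : Λ} {A : Set X} (h : AlmostNormedBelow P r l A)
    (hl : l ≤ l') : AlmostNormedBelow P r l' A := fun y hy ε hε => by
  obtain ⟨μ, hμ, g, hg, hy⟩ := h y hy ε hε
  exact ⟨μ, hμ.trans hl, g, hg, hy⟩

namespace IsProjSkeleton

theorem exists_ge_almostNormedBelow (hsk : IsProjSkeleton P) {r : ℝ}
    (hnorm : IsNorming (inducedSubspace P) r) (hr : 0 < r) {A : Set X} (hA : A.Countable)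
    (l : Λ) : ∃ l', l ≤ l' ∧ AlmostNormedBelow P r l' A := by
  have : ∀ (y : A) (n : ℕ), ∃ μ, ∃ g : StrongDual ℝ X, ‖g.comp (P μ)‖ ≤ 1 ∧
      ‖(y : X)‖ ≤ r * |g (P μ y)| + 1 / (n + 1) := fun y n => by
    obtain ⟨f, hfD, hf, hy⟩ :=
      hnorm.exists_almost_norming hr (zero_mem_inducedSubspace l) y Nat.one_div_pos_of_nat
    obtain ⟨μ, g, rfl⟩ := mem_iUnion.1 hfD
    exact ⟨μ, g, hf, hy⟩
  choose μ g hg hy using this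
  have := hA.to_subtype
  obtain ⟨b, hlb, hb⟩ := hsk.exists_ge_of_countable (fun p : A × ℕ => μ p.1 p.2) l
  refine ⟨b, hlb, fun y hyA ε hε => ?_⟩
  obtain ⟨n, hn⟩ := exists_nat_one_div_lt hε
  exact ⟨_, hb (⟨y, hyA⟩, n), g _ n, hg _ n, (hy ⟨y, hyA⟩ n).trans (by linarith)⟩

theorem opNorm_le_of_almostNormedBelow (hsk : IsProjSkeleton P) {r : ℝ} (hr : 0 ≤ r) {s : Λ}
    {A : Set X} (hA : range (P s) ⊆ closure A) (h : AlmostNormedBelow P r s A) :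
    ‖P s‖ ≤ r :=
  (P s).opNorm_le_of_almost_norming hr hA fun y hy ε hε => by
    obtain ⟨μ, hμ, g, hg, hy⟩ := h y hy ε hε
    exact ⟨g.comp (P μ), hg, by rw [ContinuousLinearMap.comp_assoc, hsk.comp_le μ s hμ], hy⟩

theorem exists_ge_opNorm_le (hsk : IsProjSkeleton P) {r : ℝ}
    (hnorm : IsNorming (inducedSubspace P) r) (hr : 0 < r) (l : Λ) :
    ∃ s, l ≤ s ∧ ‖P s‖ ≤ r := by
  choose c hc hc_dense using hsk.sep
  choose F hF_ge hF using fun l => hsk.exists_ge_almostNormedBelow hnorm hr (hc l) l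
  let seq : ℕ → Λ := fun n => F^[n] l
  have hseq_succ : ∀ n, seq (n + 1) = F (seq n) := fun n => Function.iterate_succ_apply' F n l
  have hmono : Monotone seq := monotone_nat_of_le_succ fun n => hseq_succ n ▸ hF_ge _
  obtain ⟨s, hs, hrange⟩ := hsk.sup_seq seq hmono
  have hle : ∀ n, seq n ≤ s := fun n => hs.1 (mem_range_self n)
  refine ⟨s, hle 0, hsk.opNorm_le_of_almostNormedBelow hr.le (A := ⋃ n, c (seq n)) ?_ ?_⟩
  · rw [hrange]
    exact closure_minimal (iUnion_subset fun n =>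
      (hc_dense _).trans (closure_mono (subset_iUnion (fun n => c (seq n)) n))) isClosed_closure
  · intro y hy
    obtain ⟨n, hn⟩ := mem_iUnion.1 hy
    exact (hF (seq n)).mono (hseq_succ n ▸ hle (n + 1)) y hn

end IsProjSkeleton

end Skeleton

theorem norming_gives_closed_cofinal_general {X : Type*} [NormedAddCommGroup X] [NormedSpace ℝ X]
    {Λ : Type*} [PartialOrder Λ] (P : Λ → X →L[ℝ] X)
    (hsk : IsProjSkeleton P)
    (hiii' : ∀ l : ℕ → Λ, Monotone l → ∀ s : Λ, IsLUB (Set.range l) s →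
      ∀ x : X, Filter.Tendsto (fun n : ℕ => P (l n) x) Filter.atTop (nhds (P s x)))
    (r : ℝ) (hr : 1 ≤ r) (hnorm : IsNorming (inducedSubspace P) r) :
    (∀ l : Λ, ∃ m : Λ, l ≤ m ∧ m ∈ {l' : Λ | ‖P l'‖ ≤ r}) ∧
    (∀ l : ℕ → Λ, Monotone l → (∀ n : ℕ, l n ∈ {l' : Λ | ‖P l'‖ ≤ r}) →
      ∀ s : Λ, IsLUB (Set.range l) s → s ∈ {l' : Λ | ‖P l'‖ ≤ r}) :=
  ⟨hsk.exists_ge_opNorm_le hnorm (by linarith), fun l hl hbound s hs =>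
    ContinuousLinearMap.opNorm_le_of_tendsto (by linarith) hbound (hiii' l hl s hs)⟩

/-- If a projectional skeleton satisfies (iii') and (v) and its induced subspace is `r`-norming
for some `r ≥ 1`, then `Λ' = {λ : ‖P λ‖ ≤ r}` is a closed cofinal subset of `Λ`. -/
theorem norming_gives_closed_cofinal {X : Type*} [NormedAddCommGroup X] [NormedSpace ℝ X]
    [CompleteSpace X] {Λ : Type*} [PartialOrder Λ] (P : Λ → X →L[ℝ] X)
    (hsk : IsProjSkeleton P)
    (hiii' : ∀ l : ℕ → Λ, Monotone l → ∀ s : Λ, IsLUB (Set.range l) s →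
      ∀ x : X, Filter.Tendsto (fun n : ℕ => P (l n) x) Filter.atTop (nhds (P s x)))
    (hv : ∃ C : ℝ, ∀ l : Λ, ‖P l‖ ≤ C)
    (r : ℝ) (hr : 1 ≤ r) (hnorm : IsNorming (inducedSubspace P) r) :
    (∀ l : Λ, ∃ m : Λ, l ≤ m ∧ m ∈ {l' : Λ | ‖P l'‖ ≤ r}) ∧
    (∀ l : ℕ → Λ, Monotone l → (∀ n : ℕ, l n ∈ {l' : Λ | ‖P l'‖ ≤ r}) →
      ∀ s : Λ, IsLUB (Set.range l) s → s ∈ {l' : Λ | ‖P l'‖ ≤ r}) :=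
  norming_gives_closed_cofinal_general P hsk hiii' r hr hnorm
end

section
/- Every Vašák Banach space is weakly Lindelöf: if X is a real Banach space for which there exist a separable metric space Σ and a usc-K map φ : Σ → X (with respect to the weak topology of X) which is onto X, then X equipped with its weak topology is a Lindelöf topological space (every open cover has a countable subcover). -/
open Set Topology Filter

/-- The weak topology `σ(X, X*)` on a normed space `X`: the topology induced by all
continuous linear functionals on `X`. -/
def weakTop (X : Type*) [NormedAddCommGroup X] [NormedSpace ℝ X] : TopologicalSpace X :=
  TopologicalSpace.induced (fun x (f : StrongDual ℝ X) => f x) Pi.topologicalSpace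

/-- A set-valued map `φ : Γ → X` is usc-K (with respect to the weak topology of `X`) if all
its values are nonempty and weakly compact and preimages (in the sense of `φ s ⊆ U`) of weakly
open sets are open. -/
def IsUscK {Γ : Type*} [TopologicalSpace Γ] {X : Type*} [NormedAddCommGroup X]
    [NormedSpace ℝ X] (φ : Γ → Set X) : Prop :=
  (∀ s, (φ s).Nonempty) ∧ (∀ s, @IsCompact X (weakTop X) (φ s)) ∧
    ∀ U : Set X, IsOpen[weakTop X] U → IsOpen {s | φ s ⊆ U}

/- An upper semicontinuous compact-valued map pulls a cover of `X` back to an open cover of `Γ`: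
each `φ s` lies in a finite union of the cover, and by upper semicontinuity so does `φ r` for all
`r` near `s`. A separable metric space is Lindelöf, so countably many of these neighbourhoods
cover `Γ`, and the corresponding finite families together form a countable subcover. -/

theorem IsLindelof.biUnion_of_isCompact_of_upperSemicontinuous {Γ X : Type*}
    [TopologicalSpace Γ] [TopologicalSpace X] {K : Set Γ} (hK : IsLindelof K) {φ : Γ → Set X}
    (hcpt : ∀ s, IsCompact (φ s)) (husc : ∀ U, IsOpen U → IsOpen {s | φ s ⊆ U}) :
    IsLindelof (⋃ s ∈ K, φ s) := by
  rw [isLindelof_iff_countable_subcover]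
  intro ι U hU hcov
  have hfinite (s : Γ) (hs : s ∈ K) : ∃ t : Finset ι, φ s ⊆ ⋃ i ∈ t, U i :=
    (hcpt s).elim_finite_subcover U hU ((subset_biUnion_of_mem hs).trans hcov)
  choose t ht using hfinite
  let W (s : K) : Set Γ := {r | φ r ⊆ ⋃ i ∈ t s s.2, U i}
  have hWopen (s : K) : IsOpen (W s) := husc _ (isOpen_biUnion fun i _ => hU i)
  have hKW : K ⊆ ⋃ s, W s := fun r hr => mem_iUnion.2 ⟨⟨r, hr⟩, ht r hr⟩
  obtain ⟨c, hc, hKc⟩ := hK.elim_countable_subcover W hWopen hKW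
  refine ⟨⋃ s ∈ c, (t s s.2 : Set ι), hc.biUnion fun s _ => (t s s.2).countable_toSet, ?_⟩
  refine iUnion₂_subset fun r hr x hx => ?_
  obtain ⟨s, hs, hrs⟩ := mem_iUnion₂.1 (hKc hr)
  obtain ⟨i, hi, hxi⟩ := mem_iUnion₂.1 (hrs hx)
  exact mem_iUnion₂.2 ⟨i, mem_iUnion₂.2 ⟨s, hs, hi⟩, hxi⟩

theorem vasak_is_weakly_lindelof_general {X : Type u} [NormedAddCommGroup X]
    [NormedSpace ℝ X] (Γ : Type v) [MetricSpace Γ]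
    [TopologicalSpace.SeparableSpace Γ] (φ : Γ → Set X) (husck : IsUscK φ)
    (honto : (⋃ s : Γ, φ s) = Set.univ) :
    @LindelofSpace X (weakTop X) := by
  let : TopologicalSpace X := weakTop X
  have : SecondCountableTopology Γ := UniformSpace.secondCountable_of_separable Γ
  obtain ⟨-, hcpt, husc⟩ := husck
  have h := isLindelof_univ.biUnion_of_isCompact_of_upperSemicontinuous hcpt husc
  rw [biUnion_univ, honto] at h
  exact isLindelof_univ_iff.1 h

/-- Every Vašák Banach space is weakly Lindelöf: `X` with its weak topology is a Lindelöf
topological space. -/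
theorem vasak_is_weakly_lindelof {X : Type u} [NormedAddCommGroup X]
    [NormedSpace ℝ X] [CompleteSpace X] (Γ : Type v) [MetricSpace Γ]
    [TopologicalSpace.SeparableSpace Γ] (φ : Γ → Set X) (husck : IsUscK φ)
    (honto : (⋃ s : Γ, φ s) = Set.univ) :
    @LindelofSpace X (weakTop X) :=
  vasak_is_weakly_lindelof_general Γ φ husck honto
end

section
/- Let X be a real Banach space. Suppose there is a sequence (A_n)_{n∈ℕ} of weak* compact subsets of X** such that for every x ∈ X and every x** ∈ X** \ j[X] there is n ∈ ℕ with j(x) ∈ A_n and x** ∉ A_n. Then there exist a family (F_s) of weak* compact subsets of X**, indexed by finite nonempty sequences s of natural numbers, and a set Σ ⊆ ℕ^ℕ of infinite sequences of natural numbers, such that j[X] = ⋃_{α∈Σ} ⋂_{k≥1} F_{(α(1),…,α(k))}. -/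
open Set Topology Filter

/-!
For `x ∈ X` let `K x` be the intersection of the weak* compact ball of radius `⌈‖x‖⌉` with all
the `A n` containing `j x`. Then `j x ∈ K x`, and a point of `K x` outside `j[X]` would be
separated from `j x` by some `A n` containing `j x`, which is absurd; so `j[X] = ⋃ₓ K x`.
Each `K x` is `⋂ₖ F (α|k+1)` for the sequence `α` that starts with the radius and then flags,
for each `n`, whether `A n` is used.
-/

/-- The weak* topology `σ(X**, X*)` on the bidual of a normed space `X`: the topology induced
by the evaluations at elements of `X*`. -/
noncomputable def weakStarTop (X : Type*) [NormedAddCommGroup X] [NormedSpace ℝ X] :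
    TopologicalSpace (StrongDual ℝ (StrongDual ℝ X)) :=
  TopologicalSpace.induced
    (fun F (f : StrongDual ℝ X) => F f) Pi.topologicalSpace

section SouslinScheme

variable {Y : Type*}

/-- The list `[m, b₀, b₁, …]` codes the set `B m ∩ ⋂ {A i | bᵢ = 1}`. -/
def flagScheme (B A : ℕ → Set Y) (s : List ℕ) : Set Y :=
  B s.headI ∩ ⋂ i ∈ {i | s[i + 1]? = some 1}, A i

theorem iInter_flagScheme_ofFn (B A : ℕ → Set Y) (α : ℕ → ℕ) :
    ⋂ k : ℕ, flagScheme B A (List.ofFn fun i : Fin (k + 1) => α i) =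
      B (α 0) ∩ ⋂ i ∈ {i | α (i + 1) = 1}, A i := by
  ext y
  simp only [flagScheme, mem_iInter, mem_inter_iff, mem_ofPred_eq, List.getElem?_ofFn]
  constructor
  · intro h
    refine ⟨by simpa using (h 0).1, fun i hi => (h (i + 1)).2 i ?_⟩
    simp [hi]
  · rintro ⟨hB, hA⟩ k
    refine ⟨by simpa using hB, fun i hi => hA i ?_⟩
    split_ifs at hi; simp_all

theorem isCompact_flagScheme [TopologicalSpace Y] {B A : ℕ → Set Y}
    (hB : ∀ m, IsCompact (B m)) (hA : ∀ n, IsClosed (A n)) (s : List ℕ) :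
    IsCompact (flagScheme B A s) :=
  (hB _).inter_right (isClosed_biInter fun i _ => hA i)

theorem exists_souslin_representation_of_separating [TopologicalSpace Y] {E : Set Y}
    {B A : ℕ → Set Y} (hB : ∀ m, IsCompact (B m)) (hEB : E ⊆ ⋃ m, B m)
    (hA : ∀ n, IsClosed (A n)) (hsep : ∀ e ∈ E, ∀ y ∉ E, ∃ n, e ∈ A n ∧ y ∉ A n) :
    ∃ (F : List ℕ → Set Y) (S : Set (ℕ → ℕ)), (∀ s, IsCompact (F s)) ∧
      E = ⋃ α ∈ S, ⋂ k : ℕ, F (List.ofFn fun i : Fin (k + 1) => α i) := by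
  classical
  refine ⟨flagScheme B A, {α | ∃ e ∈ E, e ∈ B (α 0) ∧ ∀ i, α (i + 1) = 1 ↔ e ∈ A i},
    isCompact_flagScheme hB hA, ?_⟩
  simp_rw [iInter_flagScheme_ofFn]
  ext y
  simp only [mem_iUnion, mem_inter_iff, mem_iInter, mem_ofPred_eq, exists_prop]
  constructor
  · intro hy
    obtain ⟨m, hm⟩ := mem_iUnion.1 (hEB hy)
    let α : ℕ → ℕ := fun | 0 => m | i + 1 => if y ∈ A i then 1 else 0
    refine ⟨α, ⟨y, hy, hm, fun i => ?_⟩, hm, fun i hi => ?_⟩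
    · by_cases h : y ∈ A i <;> simp [α, h]
    · by_contra h
      simp [α, h] at hi
  · rintro ⟨α, ⟨e, he, -, hα⟩, -, hy⟩
    by_contra hyE
    obtain ⟨n, hen, hyn⟩ := hsep e he y hyE
    exact hyn (hy n ((hα n).2 hen))

end SouslinScheme

theorem vasak_condition_one_implies_two_general {X : Type u} [NormedAddCommGroup X] [NormedSpace ℝ X]
    (A : ℕ → Set (StrongDual ℝ (StrongDual ℝ X)))
    (hA : ∀ n : ℕ, @IsCompact _ (weakStarTop X) (A n))
    (hsep : ∀ (x : X) (F : StrongDual ℝ (StrongDual ℝ X)),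
      F ∉ Set.range (NormedSpace.inclusionInDoubleDual ℝ X) →
      ∃ n : ℕ, NormedSpace.inclusionInDoubleDual ℝ X x ∈ A n ∧ F ∉ A n) :
    ∃ (F : List ℕ → Set (StrongDual ℝ (StrongDual ℝ X))) (S : Set (ℕ → ℕ)),
      (∀ s : List ℕ, s ≠ [] → @IsCompact _ (weakStarTop X) (F s)) ∧
      Set.range (NormedSpace.inclusionInDoubleDual ℝ X) =
        ⋃ α ∈ S, ⋂ k : ℕ, F (List.ofFn (fun i : Fin (k + 1) => α i)) := by
  let j := NormedSpace.inclusionInDoubleDual ℝ X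
  -- `weakStarTop X` is definitionally the topology of `WeakDual ℝ (StrongDual ℝ X)`.
  let ball (m : ℕ) : Set (WeakDual ℝ (StrongDual ℝ X)) :=
    WeakDual.toStrongDual ⁻¹' Metric.closedBall 0 m
  have hcover : range j ⊆ ⋃ m : ℕ, ball m := by
    rintro _ ⟨x, rfl⟩
    exact mem_iUnion.2 ⟨⌈‖j x‖⌉₊, (mem_closedBall_zero_iff (a := j x)).2 (Nat.le_ceil _)⟩
  have hclosed (n : ℕ) : IsClosed (X := WeakDual ℝ (StrongDual ℝ X)) (A n) :=
    IsCompact.isClosed (X := WeakDual ℝ (StrongDual ℝ X)) (hA n)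
  obtain ⟨F, S, hF, hS⟩ := exists_souslin_representation_of_separating
    (fun m => WeakDual.isCompact_closedBall 0 m) hcover hclosed
    (by rintro _ ⟨x, rfl⟩ y hy; exact hsep x y hy)
  exact ⟨F, S, fun s _ => hF s, hS⟩

/-- If there is a sequence `(A n)` of weak* compact subsets of `X**` separating the points of
`j[X]` from the points of `X** \ j[X]`, then `j[X]` can be written as
`⋃_{α ∈ Σ} ⋂_{k ≥ 1} F (α(1), …, α(k))` for a family `(F s)` of weak* compact subsets of `X**`
indexed by finite nonempty sequences of natural numbers and a set `Σ ⊆ ℕ^ℕ`. -/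
theorem vasak_condition_one_implies_two {X : Type u} [NormedAddCommGroup X] [NormedSpace ℝ X]
    [CompleteSpace X]
    (A : ℕ → Set (StrongDual ℝ (StrongDual ℝ X)))
    (hA : ∀ n : ℕ, @IsCompact _ (weakStarTop X) (A n))
    (hsep : ∀ (x : X) (F : StrongDual ℝ (StrongDual ℝ X)),
      F ∉ Set.range (NormedSpace.inclusionInDoubleDual ℝ X) →
      ∃ n : ℕ, NormedSpace.inclusionInDoubleDual ℝ X x ∈ A n ∧ F ∉ A n) :
    ∃ (F : List ℕ → Set (StrongDual ℝ (StrongDual ℝ X))) (S : Set (ℕ → ℕ)),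
      (∀ s : List ℕ, s ≠ [] → @IsCompact _ (weakStarTop X) (F s)) ∧
      Set.range (NormedSpace.inclusionInDoubleDual ℝ X) =
        ⋃ α ∈ S, ⋂ k : ℕ, F (List.ofFn (fun i : Fin (k + 1) => α i)) :=
  vasak_condition_one_implies_two_general A hA hsep
end

section
/- Let X be a real Banach space. Suppose there exist a family (F_s) of weak* compact subsets of X**, indexed by finite nonempty sequences s of natural numbers, and a set Σ ⊆ ℕ^ℕ of infinite sequences of natural numbers, such that j[X] = ⋃_{α∈Σ} ⋂_{k≥1} F_{(α(1),…,α(k))}. Then X is Vašák: there exist a separable metric space Σ' and a usc-K map φ : Σ' → X (with respect to the weak topology of X) which is onto X. -/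
open Set Topology Filter

-- `⋂_{k ≥ 1} F (α(1), …, α(k))`, with `α` indexed from `0`.
def souslinKernel {E : Type*} (F : List ℕ → Set E) (α : ℕ → ℕ) : Set E :=
  ⋂ k : ℕ, F (List.ofFn fun i : Fin (k + 1) => α i)

theorem souslinKernel_subset_biInter_of_mem_cylinder {E : Type*} (F : List ℕ → Set E)
    {α β : ℕ → ℕ} {n : ℕ} (h : β ∈ PiNat.cylinder α (n + 1)) :
    souslinKernel F β ⊆ ⋂ k ≤ n, F (List.ofFn fun i : Fin (k + 1) => α i) := by
  refine subset_iInter₂ fun k hk => ?_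
  have hprefix :
      (List.ofFn fun i : Fin (k + 1) => β i) = List.ofFn fun i : Fin (k + 1) => α i := by
    congr 1
    funext i
    exact PiNat.mem_cylinder_iff.1 h i (by omega)
  exact hprefix ▸ iInter_subset _ k

section SouslinKernel

variable {E : Type*} [TopologicalSpace E] [T2Space E] {F : List ℕ → Set E}

theorem isCompact_biInter_prefix (hF : ∀ s : List ℕ, s ≠ [] → IsCompact (F s)) (α : ℕ → ℕ)
    (n : ℕ) : IsCompact (⋂ k ≤ n, F (List.ofFn fun i : Fin (k + 1) => α i)) :=
  (hF _ (by simp)).of_isClosed_subset (isClosed_biInter fun _ _ => (hF _ (by simp)).isClosed)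
    (biInter_subset_of_mem (Nat.zero_le n))

theorem isCompact_souslinKernel (hF : ∀ s : List ℕ, s ≠ [] → IsCompact (F s)) (α : ℕ → ℕ) :
    IsCompact (souslinKernel F α) :=
  (hF _ (by simp)).of_isClosed_subset (isClosed_iInter fun _ => (hF _ (by simp)).isClosed)
    (iInter_subset _ 0)

theorem isOpen_setOf_souslinKernel_subset (hF : ∀ s : List ℕ, s ≠ [] → IsCompact (F s))
    {W : Set E} (hW : IsOpen W) : IsOpen {α : ℕ → ℕ | souslinKernel F α ⊆ W} := by
  refine isOpen_iff_mem_nhds.2 fun α hα => ?_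
  have hdir : Directed (· ⊇ ·) fun n => ⋂ k ≤ n, F (List.ofFn fun i : Fin (k + 1) => α i) :=
    directed_of_isDirected_le fun _ _ hmn =>
      biInter_subset_biInter_left fun _ hk => le_trans hk hmn
  obtain ⟨n, hn⟩ := exists_subset_nhds_of_isCompact hdir (isCompact_biInter_prefix hF α)
    fun x hx => hW.mem_nhds <| hα <|
      mem_iInter.2 fun k => mem_iInter₂.1 (mem_iInter.1 hx k) k le_rfl
  exact mem_of_superset
    ((PiNat.isOpen_cylinder _ α (n + 1)).mem_nhds (PiNat.self_mem_cylinder α _)) fun β hβ =>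
    (souslinKernel_subset_biInter_of_mem_cylinder F hβ).trans hn

end SouslinKernel

theorem weakTop_eq_induced (X : Type*) [NormedAddCommGroup X] [NormedSpace ℝ X] :
    weakTop X = (weakStarTop X).induced (NormedSpace.inclusionInDoubleDual ℝ X) := by
  rw [weakStarTop, induced_compose]
  rfl

theorem t2Space_weakStarTop (X : Type*) [NormedAddCommGroup X] [NormedSpace ℝ X] :
    @T2Space _ (weakStarTop X) :=
  letI := weakStarTop X
  IsEmbedding.t2Space ⟨⟨rfl⟩, fun _ _ h => DFunLike.coe_injective (funext (congrFun h ·))⟩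

theorem isUscK_preimage_inclusionInDoubleDual {X : Type*} [NormedAddCommGroup X]
    [NormedSpace ℝ X] {Γ : Type*} [TopologicalSpace Γ]
    {ψ : Γ → Set (StrongDual ℝ (StrongDual ℝ X))} (hne : ∀ s, (ψ s).Nonempty)
    (hrange : ∀ s, ψ s ⊆ range (NormedSpace.inclusionInDoubleDual ℝ X))
    (hcompact : ∀ s, @IsCompact _ (weakStarTop X) (ψ s))
    (husc : ∀ W, IsOpen[weakStarTop X] W → IsOpen {s | ψ s ⊆ W}) :
    IsUscK fun s => NormedSpace.inclusionInDoubleDual ℝ X ⁻¹' ψ s := by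
  let _ := weakStarTop X
  have hind : @IsInducing _ _ (weakTop X) _ (NormedSpace.inclusionInDoubleDual ℝ X) :=
    @IsInducing.mk _ _ (weakTop X) _ _ (weakTop_eq_induced X)
  refine ⟨fun s => ?_, fun s => ?_, fun U hU => ?_⟩
  · obtain ⟨_, hy⟩ := hne s
    obtain ⟨x, rfl⟩ := hrange s hy
    exact ⟨x, hy⟩
  · rw [@IsInducing.isCompact_iff _ _ (weakTop X) _ _ _ hind,
      image_preimage_eq_of_subset (hrange s)]
    exact hcompact s
  · rw [weakTop_eq_induced] at hU
    obtain ⟨W, hW, rfl⟩ := hU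
    simpa only [preimage_subset_preimage_iff (hrange _)] using husc W hW

theorem vasak_condition_two_implies_three_general {X : Type u} [NormedAddCommGroup X] [NormedSpace ℝ X]
    (F : List ℕ → Set (StrongDual ℝ (StrongDual ℝ X))) (S : Set (ℕ → ℕ))
    (hF : ∀ s : List ℕ, s ≠ [] → @IsCompact _ (weakStarTop X) (F s))
    (hrep : Set.range (NormedSpace.inclusionInDoubleDual ℝ X) =
      ⋃ α ∈ S, ⋂ k : ℕ, F (List.ofFn (fun i : Fin (k + 1) => α i))) :
    ∃ (Γ : Type) (_ : MetricSpace Γ) (_ : TopologicalSpace.SeparableSpace Γ)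
      (φ : Γ → Set X), IsUscK φ ∧ (⋃ s : Γ, φ s) = Set.univ := by
  let _ := weakStarTop X
  have := t2Space_weakStarTop X
  let _ : MetricSpace (ℕ → ℕ) := PiNat.metricSpaceNatNat
  have hrange : ∀ α ∈ S, souslinKernel F α ⊆ range (NormedSpace.inclusionInDoubleDual ℝ X) :=
    fun α hα => hrep ▸ subset_biUnion_of_mem (u := souslinKernel F) hα
  refine ⟨{α // α ∈ S ∧ (souslinKernel F α).Nonempty}, inferInstance, inferInstance,
    fun γ => NormedSpace.inclusionInDoubleDual ℝ X ⁻¹' souslinKernel F γ.1,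
    isUscK_preimage_inclusionInDoubleDual (fun γ => γ.2.2) (fun γ => hrange γ.1 γ.2.1)
      (fun γ => isCompact_souslinKernel hF γ.1)
      (fun W hW => (isOpen_setOf_souslinKernel_subset hF hW).preimage continuous_subtype_val),
    eq_univ_of_forall fun x => ?_⟩
  obtain ⟨α, hα, hx⟩ := mem_iUnion₂.1 (hrep ▸ mem_range_self x :
    NormedSpace.inclusionInDoubleDual ℝ X x ∈ ⋃ α ∈ S, souslinKernel F α)
  exact mem_iUnion.2 ⟨⟨α, hα, _, hx⟩, hx⟩

/-- If `j[X] = ⋃_{α ∈ Σ} ⋂_{k ≥ 1} F (α(1), …, α(k))` for a family `(F s)` of weak* compact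
subsets of `X**` indexed by finite nonempty sequences of natural numbers and a set `Σ ⊆ ℕ^ℕ`,
then `X` is Vašák: there is a separable metric space `Γ` and a usc-K map `φ : Γ → X` (with
respect to the weak topology of `X`) which is onto `X`. -/
theorem vasak_condition_two_implies_three {X : Type u} [NormedAddCommGroup X] [NormedSpace ℝ X]
    [CompleteSpace X]
    (F : List ℕ → Set (StrongDual ℝ (StrongDual ℝ X))) (S : Set (ℕ → ℕ))
    (hF : ∀ s : List ℕ, s ≠ [] → @IsCompact _ (weakStarTop X) (F s))
    (hrep : Set.range (NormedSpace.inclusionInDoubleDual ℝ X) =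
      ⋃ α ∈ S, ⋂ k : ℕ, F (List.ofFn (fun i : Fin (k + 1) => α i))) :
    ∃ (Γ : Type) (_ : MetricSpace Γ) (_ : TopologicalSpace.SeparableSpace Γ)
      (φ : Γ → Set X), IsUscK φ ∧ (⋃ s : Γ, φ s) = Set.univ :=
  vasak_condition_two_implies_three_general F S hF hrep
end

section
/- Let X be a real Banach space which is Vašák, i.e., there exist a separable metric space Σ and a usc-K map φ : Σ → X (with respect to the weak topology of X) which is onto X. Then there is a sequence (A_n)_{n∈ℕ} of weak* compact subsets of X** such that for every x ∈ X and every x** ∈ X** \ j[X] there is n ∈ ℕ with j(x) ∈ A_n and x** ∉ A_n. -/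
/-!
Compose the usc-K map `φ` with the weak-to-weak* continuous embedding `j : X → X**`; this gives
an upper semicontinuous map with weak* compact values. Enumerate a countable basis `(B i)` of
`Γ` and let `S i` be the weak* closure of `j[⋃_{t ∈ B i} φ t]`. Given `x ∈ φ s` and
`x** ∉ j[X]`, separate the compact set `j[φ s]` from `x**` by an open set `U` with
`x** ∉ cl U`; upper semicontinuity gives a basic `B i ∋ s` with `j[φ t] ⊆ U` for `t ∈ B i`, so
`j x ∈ S i ∌ x**`. Cutting `S i` with the closed balls of integer radius makes the sets weak*
compact by Banach–Alaoglu.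
-/

open Set Topology Filter

open NormedSpace TopologicalSpace

theorem IsUscK.image_inclusionInDoubleDualWeak {Γ X : Type*} [TopologicalSpace Γ]
    [NormedAddCommGroup X] [NormedSpace ℝ X] {φ : Γ → Set X} (hφ : IsUscK φ) :
    (∀ s, IsCompact (inclusionInDoubleDualWeak ℝ X '' φ s)) ∧
      ∀ U, IsOpen U → IsOpen {s | inclusionInDoubleDualWeak ℝ X '' φ s ⊆ U} := by
  have hj := (inclusionInDoubleDualWeak ℝ X).continuous
  refine ⟨fun s => @IsCompact.image _ _ (weakTop X) _ _ _ (hφ.2.1 s) hj, fun U hU => ?_⟩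
  convert hφ.2.2 _ (@IsOpen.preimage _ _ (weakTop X) _ _ hj _ hU) using 3
  exact image_subset_iff

theorem IsCompact.exists_isOpen_superset_notMem_closure {Y : Type*} [TopologicalSpace Y]
    [T2Space Y] {K : Set Y} (hK : IsCompact K) {y : Y} (hy : y ∉ K) :
    ∃ U, IsOpen U ∧ K ⊆ U ∧ y ∉ closure U := by
  obtain ⟨U, V, hU, hV, hKU, hyV, hUV⟩ := hK.separation_of_notMem hy
  exact ⟨U, hU, hKU, fun hy' => (hUV.closure_left hV).notMem_of_mem_right hyV hy'⟩

theorem exists_seq_isClosed_separating_of_upperSemicontinuous {Γ Y : Type*}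
    [TopologicalSpace Γ] [SecondCountableTopology Γ] [TopologicalSpace Y] [T2Space Y]
    {φ : Γ → Set Y} (hφ_compact : ∀ s, IsCompact (φ s))
    (hφ_usc : ∀ U, IsOpen U → IsOpen {s | φ s ⊆ U}) :
    ∃ S : ℕ → Set Y, (∀ i, IsClosed (S i)) ∧ ∀ s, ∀ y ∉ φ s, ∃ i, φ s ⊆ S i ∧ y ∉ S i := by
  obtain ⟨b, hb_countable, -, hb⟩ := exists_countable_basis Γ
  obtain ⟨B, hB⟩ := (hb_countable.insert ∅).exists_eq_range (insert_nonempty _ _)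
  refine ⟨fun i => closure (⋃ t ∈ B i, φ t), fun i => isClosed_closure, fun s y hy => ?_⟩
  obtain ⟨U, hU, hsU, hyU⟩ := (hφ_compact s).exists_isOpen_superset_notMem_closure hy
  obtain ⟨W, hWb, hsW, hWU⟩ := hb.exists_subset_of_mem_open (a := s) hsU (hφ_usc U hU)
  obtain ⟨i, rfl⟩ : W ∈ range B := hB ▸ mem_insert_of_mem _ hWb
  have hBU : ⋃ t ∈ B i, φ t ⊆ U := iUnion₂_subset fun t ht => hWU ht
  exact ⟨i, (subset_biUnion_of_mem hsW).trans subset_closure,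
    fun hyS => hyU (closure_mono hBU hyS)⟩

theorem WeakDual.isCompact_inter_preimage_closedBall {𝕜 E : Type*} [NontriviallyNormedField 𝕜]
    [ProperSpace 𝕜] [SeminormedAddCommGroup E] [NormedSpace 𝕜 E] {C : Set (WeakDual 𝕜 E)}
    (hC : IsClosed C) (r : ℝ) :
    IsCompact (C ∩ toStrongDual ⁻¹' Metric.closedBall 0 r) :=
  (isCompact_closedBall 0 r).of_isClosed_subset (hC.inter (isCompact_closedBall 0 r).isClosed)
    inter_subset_right

theorem vasak_condition_three_implies_one_general {X : Type u} [NormedAddCommGroup X] [NormedSpace ℝ X]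
    (Γ : Type v) [MetricSpace Γ] [TopologicalSpace.SeparableSpace Γ]
    (φ : Γ → Set X) (husck : IsUscK φ) (honto : (⋃ s : Γ, φ s) = Set.univ) :
    ∃ A : ℕ → Set (StrongDual ℝ (StrongDual ℝ X)),
      (∀ n : ℕ, @IsCompact _ (weakStarTop X) (A n)) ∧
      ∀ (x : X) (G : StrongDual ℝ (StrongDual ℝ X)),
        G ∉ Set.range (NormedSpace.inclusionInDoubleDual ℝ X) →
        ∃ n : ℕ, NormedSpace.inclusionInDoubleDual ℝ X x ∈ A n ∧ G ∉ A n := by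
  obtain ⟨hφ_compact, hφ_usc⟩ := husck.image_inclusionInDoubleDualWeak
  obtain ⟨S, hS_closed, hS⟩ :=
    exists_seq_isClosed_separating_of_upperSemicontinuous hφ_compact hφ_usc
  refine ⟨fun n => S n.unpair.1 ∩ WeakDual.toStrongDual ⁻¹' Metric.closedBall 0 n.unpair.2,
    fun n => WeakDual.isCompact_inter_preimage_closedBall (hS_closed _) _, fun x G hG => ?_⟩
  obtain ⟨s, hxs⟩ := mem_iUnion.1 (honto ▸ mem_univ x)
  obtain ⟨i, hφS, hGS⟩ := hS s G fun ⟨y, _, hy⟩ => hG ⟨y, hy⟩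
  refine ⟨Nat.pair i ⌈‖x‖⌉₊, ?_, ?_⟩ <;> simp only [Nat.unpair_pair]
  · refine ⟨hφS (mem_image_of_mem _ hxs), ?_⟩
    show inclusionInDoubleDual ℝ X x ∈ Metric.closedBall (0 : StrongDual ℝ (StrongDual ℝ X)) _
    refine (dist_zero_right (inclusionInDoubleDual ℝ X x)).le.trans ?_
    exact (double_dual_bound ℝ X x).trans (Nat.le_ceil _)
  · exact fun hG' => hGS hG'.1

/-- If `X` is Vašák, witnessed by a separable metric space `Γ` and a usc-K map `φ : Γ → X`
onto `X`, then there is a sequence `(A n)` of weak* compact subsets of `X**` such that for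
every `x ∈ X` and every `x** ∈ X** \ j[X]` there is `n` with `j x ∈ A n` and `x** ∉ A n`. -/
theorem vasak_condition_three_implies_one {X : Type u} [NormedAddCommGroup X] [NormedSpace ℝ X]
    [CompleteSpace X] (Γ : Type v) [MetricSpace Γ] [TopologicalSpace.SeparableSpace Γ]
    (φ : Γ → Set X) (husck : IsUscK φ) (honto : (⋃ s : Γ, φ s) = Set.univ) :
    ∃ A : ℕ → Set (StrongDual ℝ (StrongDual ℝ X)),
      (∀ n : ℕ, @IsCompact _ (weakStarTop X) (A n)) ∧
      ∀ (x : X) (G : StrongDual ℝ (StrongDual ℝ X)),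
        G ∉ Set.range (NormedSpace.inclusionInDoubleDual ℝ X) →
        ∃ n : ℕ, NormedSpace.inclusionInDoubleDual ℝ X x ∈ A n ∧ G ∉ A n :=
  vasak_condition_three_implies_one_general Γ φ husck honto
end

section
/- Let X be a real Banach space and (P_λ)_{λ∈Λ} a projectional skeleton on X satisfying moreover sup_{λ∈Λ} ‖P_λ‖ < ∞. Then condition (iii) can be strengthened to (iii'): for every increasing sequence (λ_n) in Λ with supremum λ ∈ Λ, one has P_λ x = lim_{n→∞} P_{λ_n} x (in norm) for every x ∈ X. -/
/-!
The operators `P (l n)` are uniformly bounded, hence equicontinuous, so the set of `y` with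
`P (l n) y → y` is closed. It contains every range `P (l m)[X]`, because `P (l n)` fixes that
range once `n ≥ m`, hence it contains their closure `P s[X]`.
Finally `P (l n) (P s x) = P (l n) x`.
-/

open Set Topology Filter

namespace IsProjSkeleton

variable {X : Type*} [NormedAddCommGroup X] [NormedSpace ℝ X] {Λ : Type*} [PartialOrder Λ]
  {P : Λ → X →L[ℝ] X}

theorem apply_apply_of_le (hsk : IsProjSkeleton P) {l m : Λ} (h : l ≤ m) (x : X) :
    P l (P m x) = P l x :=
  DFunLike.congr_fun (hsk.comp_le l m h) x

theorem apply_eq_self_of_mem_range_s7 (hsk : IsProjSkeleton P) {l m : Λ} (h : l ≤ m) {y : X}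
    (hy : y ∈ range (P l)) : P m y = y := by
  obtain ⟨z, rfl⟩ := hy
  exact DFunLike.congr_fun (hsk.le_comp l m h) z

theorem tendsto_apply_of_mem_range (hsk : IsProjSkeleton P) {l : ℕ → Λ} (hl : Monotone l)
    {m : ℕ} {y : X} (hy : y ∈ range (P (l m))) :
    Tendsto (fun n => P (l n) y) atTop (𝓝 y) :=
  tendsto_const_nhds.congr' <| eventually_atTop.2
    ⟨m, fun _ hn => (hsk.apply_eq_self_of_mem_range_s7 (hl hn) hy).symm⟩

end IsProjSkeleton

theorem skeleton_bounded_implies_pointwise_convergence_general {X : Type*} [NormedAddCommGroup X]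
    [NormedSpace ℝ X] {Λ : Type*} [PartialOrder Λ] (P : Λ → X →L[ℝ] X)
    (hsk : IsProjSkeleton P) (hv : ∃ C : ℝ, ∀ l : Λ, ‖P l‖ ≤ C) :
    ∀ l : ℕ → Λ, Monotone l → ∀ s : Λ, IsLUB (Set.range l) s →
      ∀ x : X, Filter.Tendsto (fun n : ℕ => P (l n) x) Filter.atTop (nhds (P s x)) := by
  intro l hl s hs x
  obtain ⟨s', hs', hrange⟩ := hsk.sup_seq l hl
  obtain rfl := hs'.unique hs
  obtain ⟨C, hC⟩ := hv
  have hequi : Equicontinuous fun n => ⇑(P (l n)) :=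
    ((NormedSpace.equicontinuous_TFAE fun n => P (l n)).out 5 1).mp
      (⟨C, fun n => hC (l n)⟩ : ∃ C, ∀ n, ‖P (l n)‖ ≤ C)
  have hfixed : range (P s') ⊆ {y | Tendsto (fun n => P (l n) y) atTop (𝓝 y)} := by
    rw [hrange]
    refine (hequi.isClosed_setOfPred_tendsto continuous_id).closure_subset_iff.2 ?_
    exact iUnion_subset fun m _ hy => hsk.tendsto_apply_of_mem_range hl hy
  exact (hfixed (mem_range_self x)).congr fun n =>
    hsk.apply_apply_of_le (hs'.1 (mem_range_self n)) x

/-- If a projectional skeleton satisfies (v) `sup ‖P λ‖ < ∞`, then condition (iii) can be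
strengthened to (iii'): for every increasing sequence with supremum `s`,
`P s x = lim P (l n) x` for every `x`. -/
theorem skeleton_bounded_implies_pointwise_convergence {X : Type*} [NormedAddCommGroup X]
    [NormedSpace ℝ X] [CompleteSpace X] {Λ : Type*} [PartialOrder Λ] (P : Λ → X →L[ℝ] X)
    (hsk : IsProjSkeleton P) (hv : ∃ C : ℝ, ∀ l : Λ, ‖P l‖ ≤ C) :
    ∀ l : ℕ → Λ, Monotone l → ∀ s : Λ, IsLUB (Set.range l) s →
      ∀ x : X, Filter.Tendsto (fun n : ℕ => P (l n) x) Filter.atTop (nhds (P s x)) :=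
  skeleton_bounded_implies_pointwise_convergence_general P hsk hv
end

section
/- Let X be a real Banach space and (P_λ)_{λ∈Λ} a projectional skeleton on X. Then there exists a closed cofinal subset Λ' ⊆ Λ such that sup_{λ∈Λ'} ‖P_λ‖ < ∞. -/
open Set Topology Filter

/-! If no sublevel set `{λ | ‖P λ‖ ≤ N}` were cofinal, one could pick indices `λ_N` above which
every projection has norm `> N`; an upper bound of all `λ_N` (the supremum of an increasing
sequence dominating them) would then carry a projection of infinite norm. So some sublevel set is
cofinal, and it is closed: `P_s` for `s = sup λ_n` is determined by the `P_{λ_n}` on a dense part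
of its range, which bounds `‖P_s‖` by `sup ‖P_{λ_n}‖`. -/

section Order

variable {Λ : Type*} [Preorder Λ] [IsDirected Λ (· ≤ ·)]

theorem exists_monotone_le (a : ℕ → Λ) : ∃ μ : ℕ → Λ, Monotone μ ∧ ∀ n, a n ≤ μ n := by
  choose up le_up_left le_up_right using fun x y : Λ => exists_ge_ge x y
  let μ : ℕ → Λ := fun n => Nat.rec (a 0) (fun n x => up x (a (n + 1))) n
  refine ⟨μ, monotone_nat_of_le_succ fun n => le_up_left _ _, fun n => ?_⟩
  cases n with
  | zero => exact le_rfl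
  | succ n => exact le_up_right _ _

theorem bddAbove_range_of_monotone (h : ∀ l : ℕ → Λ, Monotone l → BddAbove (range l))
    (a : ℕ → Λ) : BddAbove (range a) := by
  obtain ⟨μ, hμ, haμ⟩ := exists_monotone_le a
  obtain ⟨s, hs⟩ := h μ hμ
  exact ⟨s, forall_mem_range.2 fun n => (haμ n).trans (hs (mem_range_self n))⟩

end Order

theorem exists_nat_cofinal_sublevel {Λ : Type*} [Preorder Λ]
    (h : ∀ a : ℕ → Λ, BddAbove (range a)) (f : Λ → ℝ) :
    ∃ N : ℕ, ∀ l, ∃ m, l ≤ m ∧ f m ≤ N := by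
  by_contra! hcof
  choose a ha using hcof
  obtain ⟨s, hs⟩ := h a
  obtain ⟨N, hN⟩ := exists_nat_ge (f s)
  exact (ha N s (hs (mem_range_self N))).not_ge hN

section OpNorm

variable {𝕜 E : Type*} [NontriviallyNormedField 𝕜] [NormedAddCommGroup E] [NormedSpace 𝕜 E]

theorem ContinuousLinearMap.opNorm_le_of_range_subset_closure {ι : Type*}
    (Q : E →L[𝕜] E) (T : ι → E →L[𝕜] E) {C : ℝ} (hC : 0 ≤ C) (hT : ∀ i, ‖T i‖ ≤ C)
    (hidem : ∀ i, (T i).comp (T i) = T i) (hcomp : ∀ i, (T i).comp Q = T i)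
    (hrange : range Q ⊆ closure (⋃ i, range (T i))) : ‖Q‖ ≤ C := by
  refine Q.opNorm_le_bound hC fun x => ?_
  -- the estimate holds for `y` in each range `T i`, hence for `y = Q x` in their closure
  let S : Set E := {y | ‖Q x‖ ≤ C * ‖x‖ + (1 + C) * ‖Q x - y‖}
  have hS : IsClosed S := isClosed_le continuous_const (by fun_prop)
  have hrange_sub : ⋃ i, range (T i) ⊆ S := by
    rintro _ ⟨_, ⟨i, rfl⟩, w, rfl⟩
    have hTQ : T i (Q x) = T i x := congrArg (· x) (hcomp i)
    have hTT : T i (T i w) = T i w := congrArg (· w) (hidem i)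
    have hdecomp : Q x = T i x + (Q x - T i w) - T i (Q x - T i w) := by
      rw [map_sub, hTQ, hTT]; abel
    calc ‖Q x‖ = ‖T i x + (Q x - T i w) - T i (Q x - T i w)‖ := by rw [← hdecomp]
      _ ≤ ‖T i x‖ + ‖Q x - T i w‖ + ‖T i (Q x - T i w)‖ :=
        norm_sub_le_of_le (norm_add_le _ _) le_rfl
      _ ≤ C * ‖x‖ + ‖Q x - T i w‖ + C * ‖Q x - T i w‖ := by
        gcongr <;> exact (T i).le_of_opNorm_le (hT i) _
      _ = C * ‖x‖ + (1 + C) * ‖Q x - T i w‖ := by ring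
  simpa [S] using closure_minimal hrange_sub hS (hrange (mem_range_self x))

end OpNorm

namespace IsProjSkeleton

variable {X : Type*} [NormedAddCommGroup X] [NormedSpace ℝ X] {Λ : Type*} [PartialOrder Λ]
  {P : Λ → X →L[ℝ] X}

theorem isDirected (hsk : IsProjSkeleton P) : IsDirected Λ (· ≤ ·) := ⟨hsk.directed⟩

theorem bddAbove_range (hsk : IsProjSkeleton P) (a : ℕ → Λ) : BddAbove (range a) :=
  haveI := hsk.isDirected
  bddAbove_range_of_monotone (fun l hl => (hsk.sup_seq l hl).imp fun _ h => h.1.1) a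

theorem norm_le_of_isLUB (hsk : IsProjSkeleton P) {l : ℕ → Λ} (hl : Monotone l) {s : Λ}
    (hs : IsLUB (range l) s) {C : ℝ} (hC : 0 ≤ C) (hb : ∀ n, ‖P (l n)‖ ≤ C) : ‖P s‖ ≤ C := by
  obtain ⟨s', hs', hrange⟩ := hsk.sup_seq l hl
  obtain rfl := hs.unique hs'
  exact (P s).opNorm_le_of_range_subset_closure (P ∘ l) hC hb (fun _ => hsk.idem _)
    (fun n => hsk.comp_le _ _ (hs.1 (mem_range_self n))) hrange.le

end IsProjSkeleton

theorem skeleton_exists_closed_cofinal_bounded_general {X : Type*} [NormedAddCommGroup X]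
    [NormedSpace ℝ X] {Λ : Type*} [PartialOrder Λ] (P : Λ → X →L[ℝ] X)
    (hsk : IsProjSkeleton P) :
    ∃ Λ' : Set Λ,
      (∀ l : Λ, ∃ m ∈ Λ', l ≤ m) ∧
      (∀ l : ℕ → Λ, Monotone l → (∀ n : ℕ, l n ∈ Λ') →
        ∀ s : Λ, IsLUB (Set.range l) s → s ∈ Λ') ∧
      (∃ C : ℝ, ∀ l ∈ Λ', ‖P l‖ ≤ C) := by
  obtain ⟨N, hN⟩ := exists_nat_cofinal_sublevel hsk.bddAbove_range fun l => ‖P l‖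
  refine ⟨{l | ‖P l‖ ≤ N}, fun l => ?_, ?_, N, fun _ hl => hl⟩
  · obtain ⟨m, hlm, hm⟩ := hN l
    exact ⟨m, hm, hlm⟩
  · intro l hl hmem s hs
    exact hsk.norm_le_of_isLUB hl hs N.cast_nonneg hmem

/-- Any projectional skeleton admits a closed cofinal subset of indices on which the norms of
the projections are bounded. -/
theorem skeleton_exists_closed_cofinal_bounded {X : Type*} [NormedAddCommGroup X]
    [NormedSpace ℝ X] [CompleteSpace X] {Λ : Type*} [PartialOrder Λ] (P : Λ → X →L[ℝ] X)
    (hsk : IsProjSkeleton P) :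
    ∃ Λ' : Set Λ,
      (∀ l : Λ, ∃ m ∈ Λ', l ≤ m) ∧
      (∀ l : ℕ → Λ, Monotone l → (∀ n : ℕ, l n ∈ Λ') →
        ∀ s : Λ, IsLUB (Set.range l) s → s ∈ Λ') ∧
      (∃ C : ℝ, ∀ l ∈ Λ', ‖P l‖ ≤ C) :=
  skeleton_exists_closed_cofinal_bounded_general P hsk
end
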